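/- arXiv:2410.06685 — 2 statements merged into one kernel-verified Lean document; each statement's English description precedes it below -/
import Mathlib

section
/- Let X and Y be coarse spaces and suppose Y is a coarse retract of X. If X is coarsely n-connected then so is Y. -/
open scoped BigOperators

open scoped BigOperators

noncomputable section

/-! ### Spheres and triviality of homotopy groups along an inclusion -/

/-- The `k`-dimensional unit sphere. -/
abbrev Sph (k : ℕ) : Set (EuclideanSpace ℝ (Fin (k + 1))) :=
  Metric.sphere 0 1

/-- The map `π_k(A) → π_k(B)` induced by an inclusion `A ⊆ B` of subspaces of `Z` is trivial
(for every basepoint): every continuous map `S^k → A` becomes nullhomotopic in `B`. -/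
def SubPiTrivial {Z : Type*} [TopologicalSpace Z] (k : ℕ) (A B : Set Z) : Prop :=
  ∃ h : A ⊆ B, ∀ σ : C(Sph k, A),
    (ContinuousMap.comp ⟨Set.inclusion h, continuous_inclusion h⟩ σ).Nullhomotopic

/-! ### Geometric realization of abstract simplicial complexes -/

/-- The geometric realization of the abstract simplicial complex with faces `F` on the vertex
set `V`, realized inside `V → ℝ` (barycentric coordinates). -/
def geomReal {V : Type*} (F : Set (Finset V)) : Set (V → ℝ) :=
  {f | (∀ v, 0 ≤ f v) ∧ ∃ s ∈ F, (∀ v, f v ≠ 0 → v ∈ s) ∧ ∑ v ∈ s, f v = 1}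

/-! ### Coarse structures -/

/-- Inverse of a relation. -/
def relInv {T : Type*} (U : Set (T × T)) : Set (T × T) := {p | (p.2, p.1) ∈ U}

/-- Composition of relations. -/
def relComp {T : Type*} (U V : Set (T × T)) : Set (T × T) :=
  {p | ∃ z, (p.1, z) ∈ U ∧ (z, p.2) ∈ V}

/-- `E` is a coarse structure on `T` (Roe). -/
structure IsCoarseStructure {T : Type*} (E : Set (Set (T × T))) : Prop where
  mem_of_subset : ∀ {U V : Set (T × T)}, U ∈ E → V ⊆ U → V ∈ E
  union_mem : ∀ {U V : Set (T × T)}, U ∈ E → V ∈ E → U ∪ V ∈ E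
  diagonal_mem : Set.diagonal T ∈ E
  inv_mem : ∀ {U : Set (T × T)}, U ∈ E → relInv U ∈ E
  comp_mem : ∀ {U V : Set (T × T)}, U ∈ E → V ∈ E → relComp U V ∈ E

/-- The simplices of the Vietoris–Rips complex of diameter `U`. -/
def VRF {T : Type*} (U : Set (T × T)) : Set (Finset T) :=
  {s | ∀ v ∈ s, ∀ w ∈ s, (v, w) ∈ U}

/-- The geometric realization of the Vietoris–Rips complex `VR_U(T)`. -/
def VRreal {T : Type*} (U : Set (T × T)) : Set (T → ℝ) := geomReal (VRF U)

/-- The filtration `(|VR_U(T)|)_{U ∈ E}` is "essentially `(m-1)`-connected": triviality of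
`π_k` for all `k < m`.  `CoarselyConnectedLT E n` says coarsely `(n-1)`-connected. -/
def CoarselyConnectedLT {T : Type*} (E : Set (Set (T × T))) (m : ℕ) : Prop :=
  ∀ U ∈ E, ∃ V ∈ E, U ⊆ V ∧ ∀ k < m, SubPiTrivial k (VRreal U) (VRreal V)

/-- `(T, E)` is coarsely `n`-connected: for every `U ∈ E` there is `V ∈ E` containing `U`
such that `π_k(|VR_U(T)| → |VR_V(T)|)` is trivial for all `k ≤ n`. -/
abbrev CoarselyConnected {T : Type*} (E : Set (Set (T × T))) (n : ℕ) : Prop :=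
  CoarselyConnectedLT E (n + 1)

/-- The image of an entourage under a map. -/
def imgRel {X Y : Type*} (f : X → Y) (U : Set (X × X)) : Set (Y × Y) :=
  (fun p : X × X => (f p.1, f p.2)) '' U

/-- A bornologous map of coarse spaces. -/
def Bornologous {X Y : Type*} (EX : Set (Set (X × X))) (EY : Set (Set (Y × Y)))
    (f : X → Y) : Prop :=
  ∀ U ∈ EX, imgRel f U ∈ EY

/-- Two maps are `U`-close. -/
def CloseMaps {X Y : Type*} (U : Set (Y × Y)) (f g : X → Y) : Prop :=
  ∀ x, (f x, g x) ∈ U ∩ relInv U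

/-- `(Y, EY)` is a coarse retract of `(X, EX)`. -/
def IsCoarseRetract {X Y : Type*} (EX : Set (Set (X × X))) (EY : Set (Set (Y × Y))) : Prop :=
  ∃ (i : Y → X) (r : X → Y), Bornologous EY EX i ∧ Bornologous EX EY r ∧
    ∃ U ∈ EY, CloseMaps U id (r ∘ i)

/-- `(X, EX)` and `(Y, EY)` are coarsely equivalent. -/
def CoarselyEquivalent {X Y : Type*} (EX : Set (Set (X × X))) (EY : Set (Set (Y × Y))) : Prop :=
  ∃ (i : Y → X) (r : X → Y), Bornologous EY EX i ∧ Bornologous EX EY r ∧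
    (∃ U ∈ EY, CloseMaps U id (r ∘ i)) ∧ (∃ U' ∈ EX, CloseMaps U' id (i ∘ r))

/-- The coarse structure `𝒦` on a topological group, generated by the entourages
`U_C = {(x,y) | x⁻¹ * y ∈ C}` for `C` relatively compact. -/
def KCoarse (G : Type*) [Group G] [TopologicalSpace G] : Set (Set (G × G)) :=
  {U | ∃ C : Set G, IsCompact (closure C) ∧ U ⊆ {p : G × G | p.1⁻¹ * p.2 ∈ C}}

/-- The metric coarse structure of a (pseudo)metric space. -/
def MetricCoarse (X : Type*) [PseudoMetricSpace X] : Set (Set (X × X)) :=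
  {U | ∃ R : ℝ, ∀ p ∈ U, dist p.1 p.2 ≤ R}

/-! ### The free simplicial set on a set and its geometric realization -/

/-- The disjoint union `Σ_n  T^{n+1} × Δ^n`, out of which the geometric realization of the free
simplicial set `ET` is glued. -/
abbrev EPt (T : Type*) : Type _ :=
  Σ n : ℕ, (Fin (n + 1) → T) × stdSimplex ℝ (Fin (n + 1))

/-- The gluing relation for the geometric realization of `ET`: for a monotone
`α : [m] → [n]`, the point `(x ∘ α, p)` is identified with `(x, α_* p)`. -/
def ERel (T : Type*) : EPt T → EPt T → Prop := fun a b =>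
  ∃ α : Fin (a.1 + 1) → Fin (b.1 + 1), Monotone α ∧ a.2.1 = b.2.1 ∘ α ∧
    ∀ j, (b.2.2 : Fin (b.1 + 1) → ℝ) j
      = ∑ i ∈ Finset.univ.filter (fun i => α i = j), (a.2.2 : Fin (a.1 + 1) → ℝ) i

/-- The geometric realization `|ET|` of the free simplicial set on the set `T`. -/
def ERealization (T : Type*) : Type _ := Quot (ERel T)

instance (T : Type*) : TopologicalSpace (ERealization T) := by
  letI : TopologicalSpace T := ⊥
  exact inferInstanceAs (TopologicalSpace (Quot (ERel T)))

/-- The subspace of `|ET|` consisting of the realization of the sub-simplicial set of `ET`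
whose simplices are the tuples contained in some member of the family `𝒜`. -/
def ESub {T : Type*} (𝒜 : Set (Set T)) : Set (ERealization T) :=
  {x | ∃ a : EPt T, Quot.mk _ a = x ∧ ∃ A ∈ 𝒜, Set.range a.2.1 ⊆ A}

/-- The family of all `G`-translates of a subset `K` of a `G`-set `T`; the simplices of the
sub-simplicial set `G · EK` of `ET` are exactly the tuples contained in a member of it. -/
def smulFam (G : Type*) {T : Type*} [SMul G T] (K : Set T) : Set (Set T) :=
  {A | ∃ g : G, A = (fun t => g • t) '' K}

/-- Abels–Tiemeyer's compactness property `C_n`: the directed system `(|G · EK|)_K`, where `K`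
runs over the relatively compact subsets of `G`, is essentially `(n-1)`-connected. -/
def TypeC (G : Type*) [Group G] [TopologicalSpace G] (n : ℕ) : Prop :=
  ∀ K : Set G, IsCompact (closure K) →
    ∃ K' : Set G, IsCompact (closure K') ∧ K ⊆ K' ∧
      ∀ i < n, SubPiTrivial i (ESub (smulFam G K)) (ESub (smulFam G K'))

/-! ### Vietoris–Rips and Čech subsets -/

/-- The Vietoris–Rips subsets of diameter `U`. -/
def VRsub {T : Type*} (U : Set (T × T)) : Set (Set T) :=
  {A | ∀ a ∈ A, ∀ b ∈ A, (a, b) ∈ U}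

/-- The Čech subsets of radius `U`. -/
def CechSub {T : Type*} (U : Set (T × T)) : Set (Set T) :=
  {A | ∃ a : T, ∀ b ∈ A, (a, b) ∈ U}

/-- The simplicial complex associated with a family of subsets closed under passing to
subsets: its faces are the finite members of the family. -/
def Cfaces {T : Type*} (𝒜 : Set (Set T)) : Set (Finset T) :=
  {s | (s : Set T) ∈ 𝒜}

namespace CoarseRetractAux

open scoped Classical

/-- Pushforward of barycentric coordinates along a map of vertex sets. -/
def push {A B : Type*} (f : A → B) (p : A → ℝ) : B → ℝ :=
  fun b => ∑' a, if f a = b then p a else 0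

lemma push_nonneg {A B : Type*} (f : A → B) {p : A → ℝ} (hp : ∀ a, 0 ≤ p a) (b : B) :
    0 ≤ push f p b :=
  tsum_nonneg fun a => by split_ifs with h; exacts [hp a, le_rfl]

lemma push_eq_sum {A B : Type*} (f : A → B) (p : A → ℝ) {s : Finset A}
    (hs : ∀ a, p a ≠ 0 → a ∈ s) (b : B) :
    push f p b = ∑ a ∈ s, if f a = b then p a else 0 :=
  tsum_eq_sum (fun a ha => by
    split_ifs with h
    · by_contra hne; exact ha (hs a hne)
    · rfl)

lemma push_support {A B : Type*} (f : A → B) (p : A → ℝ) (b : B)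
    (h : push f p b ≠ 0) : ∃ a, f a = b ∧ p a ≠ 0 := by
  by_contra hc
  push_neg at hc
  apply h
  have hz : (fun a => if f a = b then p a else 0) = fun _ => (0 : ℝ) := by
    funext a; split_ifs with hfa
    · exact hc a hfa
    · rfl
  rw [push, hz, tsum_zero]

lemma sum_eq_one_of_supp {A : Type*} {p : A → ℝ} {s t : Finset A}
    (hsupp : ∀ a, p a ≠ 0 → a ∈ s) (hsum : ∑ a ∈ s, p a = 1)
    (ht : ∀ a, p a ≠ 0 → a ∈ t) : ∑ a ∈ t, p a = 1 := by
  classical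
  have h1 : ∑ a ∈ t, p a = ∑ a ∈ t ∪ s, p a :=
    Finset.sum_subset Finset.subset_union_left (fun x _ hx => by
      by_contra h; exact hx (ht x h))
  have h2 : ∑ a ∈ s, p a = ∑ a ∈ t ∪ s, p a :=
    Finset.sum_subset Finset.subset_union_right (fun x _ hx => by
      by_contra h; exact hx (hsupp x h))
  rw [h1, ← h2, hsum]

lemma push_mem_geomReal {A B : Type*} (f : A → B)
    {F : Set (Finset A)} {G : Set (Finset B)}
    (hFG : ∀ s ∈ F, s.image f ∈ G) {p : A → ℝ} (hp : p ∈ geomReal F) :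
    push f p ∈ geomReal G := by
  obtain ⟨hpos, s, hsF, hsupp, hsum⟩ := hp
  refine ⟨push_nonneg f hpos, s.image f, hFG s hsF, ?_, ?_⟩
  · intro b hb
    obtain ⟨a, hfa, hpa⟩ := push_support f p b hb
    exact Finset.mem_image.2 ⟨a, hsupp a hpa, hfa⟩
  · calc ∑ b ∈ s.image f, push f p b
        = ∑ b ∈ s.image f, ∑ a ∈ s, (if f a = b then p a else 0) :=
          Finset.sum_congr rfl (fun b _ => push_eq_sum f p hsupp b)
      _ = ∑ a ∈ s, ∑ b ∈ s.image f, (if f a = b then p a else 0) := Finset.sum_comm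
      _ = ∑ a ∈ s, p a := Finset.sum_congr rfl (fun a ha => by
            rw [Finset.sum_ite_eq]
            exact if_pos (Finset.mem_image_of_mem f ha))
      _ = 1 := hsum

lemma continuous_push {A B : Type*} (f : A → B) (F : Set (Finset A)) :
    Continuous (fun p : geomReal F => push f (p : A → ℝ)) := by
  classical
  rw [continuous_iff_continuousAt]
  intro p₀
  rw [continuousAt_pi]
  intro b
  obtain ⟨hpos₀, s₀, hs₀F, hsupp₀, hsum₀⟩ := p₀.2
  have key : ∀ p : geomReal F,
      |push f (p : A → ℝ) b - push f (p₀ : A → ℝ) b|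
        ≤ 2 * ∑ a ∈ s₀, |(p : A → ℝ) a - (p₀ : A → ℝ) a| := by
    intro p
    obtain ⟨hpos, s₁, hs₁F, hsupp₁, hsum₁⟩ := p.2
    set s : Finset A := s₀ ∪ s₁ with hsdef
    have hsub₀ : s₀ ⊆ s := Finset.subset_union_left
    have hsupp₀' : ∀ a, (p₀ : A → ℝ) a ≠ 0 → a ∈ s := fun a h => hsub₀ (hsupp₀ a h)
    have hsupp₁' : ∀ a, (p : A → ℝ) a ≠ 0 → a ∈ s :=
      fun a h => Finset.subset_union_right (hsupp₁ a h)
    rw [push_eq_sum f _ hsupp₁' b, push_eq_sum f _ hsupp₀' b, ← Finset.sum_sub_distrib]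
    have habs : |∑ a ∈ s, ((if f a = b then (p : A → ℝ) a else 0)
          - (if f a = b then (p₀ : A → ℝ) a else 0))|
        ≤ ∑ a ∈ s, |(p : A → ℝ) a - (p₀ : A → ℝ) a| := by
      refine (Finset.abs_sum_le_sum_abs _ _).trans (Finset.sum_le_sum fun a _ => ?_)
      split_ifs
      · exact le_rfl
      · simp
    refine habs.trans ?_
    have hsplit : ∑ a ∈ s, |(p : A → ℝ) a - (p₀ : A → ℝ) a|
        = ∑ a ∈ s \ s₀, |(p : A → ℝ) a - (p₀ : A → ℝ) a|
          + ∑ a ∈ s₀, |(p : A → ℝ) a - (p₀ : A → ℝ) a| :=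
      (Finset.sum_sdiff hsub₀).symm
    have hzero : ∀ a ∈ s \ s₀, |(p : A → ℝ) a - (p₀ : A → ℝ) a| = (p : A → ℝ) a := by
      intro a ha
      have h0 : (p₀ : A → ℝ) a = 0 := by
        by_contra h
        exact (Finset.mem_sdiff.1 ha).2 (hsupp₀ a h)
      rw [h0, sub_zero, abs_of_nonneg (hpos a)]
    have hsum_s : ∑ a ∈ s, (p : A → ℝ) a = 1 :=
      sum_eq_one_of_supp hsupp₁ hsum₁ hsupp₁'
    have htail : ∑ a ∈ s \ s₀, |(p : A → ℝ) a - (p₀ : A → ℝ) a|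
        ≤ ∑ a ∈ s₀, |(p : A → ℝ) a - (p₀ : A → ℝ) a| := by
      rw [Finset.sum_congr rfl hzero]
      have h1 : ∑ a ∈ s \ s₀, (p : A → ℝ) a = 1 - ∑ a ∈ s₀, (p : A → ℝ) a := by
        have := Finset.sum_sdiff (f := fun a => (p : A → ℝ) a) hsub₀
        linarith [this, hsum_s]
      rw [h1, ← hsum₀]
      calc ∑ a ∈ s₀, (p₀ : A → ℝ) a - ∑ a ∈ s₀, (p : A → ℝ) a
          = ∑ a ∈ s₀, ((p₀ : A → ℝ) a - (p : A → ℝ) a) := (Finset.sum_sub_distrib _ _).symm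
        _ ≤ ∑ a ∈ s₀, |(p : A → ℝ) a - (p₀ : A → ℝ) a| :=
            Finset.sum_le_sum (fun a _ => by rw [abs_sub_comm]; exact le_abs_self _)
    rw [hsplit]
    linarith
  have hcont : Continuous (fun p : geomReal F =>
      2 * ∑ a ∈ s₀, |(p : A → ℝ) a - (p₀ : A → ℝ) a|) := by
    refine continuous_const.mul (continuous_finset_sum _ fun a _ => ?_)
    exact (((continuous_apply a).comp continuous_subtype_val).sub continuous_const).abs
  have h0 : Filter.Tendsto (fun p : geomReal F =>
      2 * ∑ a ∈ s₀, |(p : A → ℝ) a - (p₀ : A → ℝ) a|) (nhds p₀) (nhds 0) := by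
    have h := hcont.continuousAt (x := p₀)
    simpa [ContinuousAt] using h
  show Filter.Tendsto (fun p : geomReal F => push f (p : A → ℝ) b) (nhds p₀)
    (nhds (push f ((p₀ : A → ℝ)) b))
  refine tendsto_of_tendsto_of_tendsto_of_le_of_le
    (g := fun p : geomReal F => push f (p₀ : A → ℝ) b
      - 2 * ∑ a ∈ s₀, |(p : A → ℝ) a - (p₀ : A → ℝ) a|)
    (h := fun p : geomReal F => push f (p₀ : A → ℝ) b
      + 2 * ∑ a ∈ s₀, |(p : A → ℝ) a - (p₀ : A → ℝ) a|)
    ?_ ?_ ?_ ?_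
  · simpa using (tendsto_const_nhds.sub h0)
  · simpa using (tendsto_const_nhds.add h0)
  · intro p
    have := key p
    have h1 := (abs_sub_le_iff.1 this).2
    dsimp only
    linarith
  · intro p
    have := key p
    have h1 := (abs_sub_le_iff.1 this).1
    dsimp only
    linarith

/-- The pushforward as a continuous map between geometric realizations. -/
def pushCM {A B : Type*} (f : A → B) {F : Set (Finset A)}
    {G : Set (Finset B)} (hFG : ∀ s ∈ F, s.image f ∈ G) :
    C(geomReal F, geomReal G) :=
  ⟨fun p => ⟨push f (p : A → ℝ), push_mem_geomReal f hFG p.2⟩,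
    (continuous_push f F).subtype_mk _⟩

/-- Straight-line homotopy between two maps into a realization whose values pairwise lie in
common faces. -/
lemma homotopic_of_common_face {V S : Type*} [TopologicalSpace S] {F : Set (Finset V)}
    (σ τ : C(S, geomReal F))
    (hc : ∀ x : S, ∃ t : Finset V, t ∈ F ∧ (∀ v, (σ x : V → ℝ) v ≠ 0 → v ∈ t)
        ∧ (∀ v, (τ x : V → ℝ) v ≠ 0 → v ∈ t)) :
    σ.Homotopic τ := by
  have hmem : ∀ q : unitInterval × S,
      (fun v => (1 - (q.1 : ℝ)) * (σ q.2 : V → ℝ) v + (q.1 : ℝ) * (τ q.2 : V → ℝ) v)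
        ∈ geomReal F := by
    rintro ⟨t, x⟩
    obtain ⟨tx, htxF, hσsupp, hτsupp⟩ := hc x
    obtain ⟨hσpos, sσ, hsσF, hsσsupp, hsσsum⟩ := (σ x).2
    obtain ⟨hτpos, sτ, hsτF, hsτsupp, hsτsum⟩ := (τ x).2
    have ht0 : (0 : ℝ) ≤ (t : ℝ) := t.2.1
    have ht1 : (t : ℝ) ≤ 1 := t.2.2
    refine ⟨fun v => add_nonneg (mul_nonneg (by linarith) (hσpos v))
      (mul_nonneg ht0 (hτpos v)), tx, htxF, ?_, ?_⟩
    · intro v hv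
      by_cases hσv : (σ x : V → ℝ) v ≠ 0
      · exact hσsupp v hσv
      · push_neg at hσv
        by_cases hτv : (τ x : V → ℝ) v ≠ 0
        · exact hτsupp v hτv
        · push_neg at hτv
          exfalso
          apply hv
          show (1 - (t : ℝ)) * (σ x : V → ℝ) v + (t : ℝ) * (τ x : V → ℝ) v = 0
          rw [hσv, hτv]
          ring
    · have hσ1 : ∑ v ∈ tx, (σ x : V → ℝ) v = 1 :=
        sum_eq_one_of_supp hsσsupp hsσsum hσsupp
      have hτ1 : ∑ v ∈ tx, (τ x : V → ℝ) v = 1 :=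
        sum_eq_one_of_supp hsτsupp hsτsum hτsupp
      show ∑ v ∈ tx, ((1 - (t : ℝ)) * (σ x : V → ℝ) v + (t : ℝ) * (τ x : V → ℝ) v) = 1
      rw [Finset.sum_add_distrib, ← Finset.mul_sum, ← Finset.mul_sum, hσ1, hτ1]
      ring
  let H : C(unitInterval × S, geomReal F) :=
    ⟨fun q => ⟨_, hmem q⟩, by
      refine Continuous.subtype_mk ?_ _
      refine continuous_pi fun v => ?_
      have hσc : Continuous fun q : unitInterval × S => (σ q.2 : V → ℝ) v :=
        (continuous_apply v).comp (continuous_subtype_val.comp (σ.continuous.comp continuous_snd))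
      have hτc : Continuous fun q : unitInterval × S => (τ q.2 : V → ℝ) v :=
        (continuous_apply v).comp (continuous_subtype_val.comp (τ.continuous.comp continuous_snd))
      have htc : Continuous fun q : unitInterval × S => (q.1 : ℝ) :=
        continuous_subtype_val.comp continuous_fst
      exact ((continuous_const.sub htc).mul hσc).add (htc.mul hτc)⟩
  refine ⟨⟨H, ?_, ?_⟩⟩
  · intro x
    apply Subtype.ext
    funext v
    show (1 - ((0 : unitInterval) : ℝ)) * (σ x : V → ℝ) v
        + ((0 : unitInterval) : ℝ) * (τ x : V → ℝ) v = (σ x : V → ℝ) v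
    norm_num
  · intro x
    apply Subtype.ext
    funext v
    show (1 - ((1 : unitInterval) : ℝ)) * (σ x : V → ℝ) v
        + ((1 : unitInterval) : ℝ) * (τ x : V → ℝ) v = (τ x : V → ℝ) v
    norm_num

lemma VRF_image {T T' : Type*} (f : T → T') {U : Set (T × T)}
    {s : Finset T} (hs : s ∈ VRF U) : s.image f ∈ VRF (imgRel f U) := by
  intro v hv w hw
  obtain ⟨a, ha, rfl⟩ := Finset.mem_image.1 hv
  obtain ⟨b, hb, rfl⟩ := Finset.mem_image.1 hw
  exact ⟨(a, b), hs a ha b hb, rfl⟩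

lemma VRreal_mono {T : Type*} {U V : Set (T × T)} (h : U ⊆ V) : VRreal U ⊆ VRreal V := by
  rintro p ⟨hpos, s, hsF, hsupp, hsum⟩
  exact ⟨hpos, s, fun v hv w hw => h (hsF v hv w hw), hsupp, hsum⟩

end CoarseRetractAux

open CoarseRetractAux in
/-- **Proposition.** Let `X` and `Y` be coarse spaces and suppose `Y` is a coarse retract
of `X`.  If `X` is coarsely `n`-connected then so is `Y`. -/
theorem coarselyConnected_of_coarseRetract {X Y : Type*}
    (EX : Set (Set (X × X))) (EY : Set (Set (Y × Y)))
    (hEX : IsCoarseStructure EX) (hEY : IsCoarseStructure EY)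
    (hretract : IsCoarseRetract EX EY) (n : ℕ)
    (hX : CoarselyConnected EX n) : CoarselyConnected EY n := by
  classical
  obtain ⟨i, r, hi, hr, U₀, hU₀, hclose⟩ := hretract
  intro U hU
  have hU₁ : imgRel i U ∈ EX := hi U hU
  obtain ⟨W, hW, hUW, hWtriv⟩ := hX (imgRel i U) hU₁
  have hV₂ : imgRel r W ∈ EY := hr W hW
  set V : Set (Y × Y) := U ∪ (imgRel r W ∪ (relComp U U₀ ∪ relComp U₀ U)) with hVdef
  have hVmem : V ∈ EY :=
    hEY.union_mem hU (hEY.union_mem hV₂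
      (hEY.union_mem (hEY.comp_mem hU hU₀) (hEY.comp_mem hU₀ hU)))
  have hUV : U ⊆ V := Set.subset_union_left
  refine ⟨V, hVmem, hUV, ?_⟩
  intro k hk
  obtain ⟨hsubW, htriv⟩ := hWtriv k hk
  have hUVr : VRreal U ⊆ VRreal V := VRreal_mono hUV
  refine ⟨hUVr, ?_⟩
  intro σ
  have hface_i : ∀ s ∈ VRF U, s.image i ∈ VRF (imgRel i U) := fun s hs => VRF_image i hs
  have hface_r : ∀ s ∈ VRF W, s.image r ∈ VRF V := by
    intro s hs v hv w hw
    exact Or.inr (Or.inl (VRF_image r hs v hv w hw))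
  let Pi : C(VRreal U, VRreal (imgRel i U)) := pushCM i hface_i
  let Pr : C(VRreal W, VRreal V) := pushCM r hface_r
  let ιW : C(VRreal (imgRel i U), VRreal W) := ⟨Set.inclusion hsubW, continuous_inclusion hsubW⟩
  have hnull : (ιW.comp (Pi.comp σ)).Nullhomotopic := htriv (Pi.comp σ)
  have hnull2 : (Pr.comp (ιW.comp (Pi.comp σ))).Nullhomotopic := hnull.comp_right Pr
  have hhom : (ContinuousMap.comp ⟨Set.inclusion hUVr, continuous_inclusion hUVr⟩ σ).Homotopic
      (Pr.comp (ιW.comp (Pi.comp σ))) := by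
    apply homotopic_of_common_face
    intro x
    obtain ⟨hpos, s, hsU, hsupp, hsum⟩ := (σ x).2
    refine ⟨s ∪ s.image (fun y => r (i y)), ?_, ?_, ?_⟩
    · intro v hv w hw
      rcases Finset.mem_union.1 hv with hv' | hv' <;> rcases Finset.mem_union.1 hw with hw' | hw'
      · exact hUV (hsU v hv' w hw')
      · obtain ⟨b, hb, rfl⟩ := Finset.mem_image.1 hw'
        exact Or.inr (Or.inr (Or.inl ⟨b, hsU v hv' b hb, (hclose b).1⟩))
      · obtain ⟨a, ha, rfl⟩ := Finset.mem_image.1 hv'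
        exact Or.inr (Or.inr (Or.inr ⟨a, (hclose a).2, hsU a ha w hw'⟩))
      · obtain ⟨a, ha, rfl⟩ := Finset.mem_image.1 hv'
        obtain ⟨b, hb, rfl⟩ := Finset.mem_image.1 hw'
        exact Or.inr (Or.inl ⟨(i a, i b), hUW ⟨(a, b), hsU a ha b hb, rfl⟩, rfl⟩)
    · intro v hvne
      exact Finset.mem_union_left _ (hsupp v hvne)
    · intro v hvne
      obtain ⟨xv, hrx, hne1⟩ := push_support r (push i ((σ x : Y → ℝ))) v hvne
      obtain ⟨a, hia, hne2⟩ := push_support i ((σ x : Y → ℝ)) xv hne1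
      exact Finset.mem_union_right _
        (Finset.mem_image.2 ⟨a, hsupp a hne2, by rw [hia, hrx]⟩)
  obtain ⟨y, hy⟩ := hnull2
  exact ⟨y, hhom.trans hy⟩

end
end

section
/- Let X and Y be coarsely equivalent coarse spaces. Then X is coarsely n-connected if and only if Y is coarsely n-connected. -/
open scoped BigOperators

open scoped BigOperators

noncomputable section

/-! ### Auxiliary machinery -/

namespace CoarseAux

variable {T T' T'' : Type*}

open scoped Classical

/-- Partial sum of a finitely-supported function over a set. -/
def psum (S : Set T) (φ : T → ℝ) : ℝ := ∑' v, S.indicator φ v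

/-- Pushforward of barycentric coordinates along a map. -/
def pushf (f : T → T') (φ : T → ℝ) : T' → ℝ := fun w => psum (f ⁻¹' {w}) φ

lemma psum_eq_sum {S : Set T} {φ : T → ℝ} {s : Finset T}
    (hsupp : ∀ v ∉ s, φ v = 0) : psum S φ = ∑ v ∈ s, S.indicator φ v := by
  refine tsum_eq_sum ?_
  intro v hv
  by_cases h : v ∈ S
  · simp [Set.indicator_of_mem h, hsupp v hv]
  · simp [Set.indicator_of_notMem h]

lemma psum_nonneg {S : Set T} {φ : T → ℝ} {s : Finset T}
    (hsupp : ∀ v ∉ s, φ v = 0) (hφ : ∀ v, 0 ≤ φ v) : 0 ≤ psum S φ := by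
  rw [psum_eq_sum hsupp]
  exact Finset.sum_nonneg fun v _ => Set.indicator_nonneg (fun a _ => hφ a) _

lemma pushf_support {f : T → T'} {φ : T → ℝ} {s : Finset T}
    (hsupp : ∀ v ∉ s, φ v = 0) {w : T'} (h : pushf f φ w ≠ 0) :
    w ∈ s.image f := by
  rw [pushf, psum_eq_sum hsupp] at h
  obtain ⟨v, hv, hvne⟩ := Finset.exists_ne_zero_of_sum_ne_zero h
  have hmem : v ∈ f ⁻¹' {w} := by
    by_contra hc
    exact hvne (Set.indicator_of_notMem hc φ)
  exact Finset.mem_image.2 ⟨v, hv, hmem⟩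

lemma pushf_sum {f : T → T'} {φ : T → ℝ} {s : Finset T}
    (hsupp : ∀ v ∉ s, φ v = 0) :
    ∑ w ∈ s.image f, pushf f φ w = ∑ v ∈ s, φ v := by
  have h1 : ∀ w, pushf f φ w = ∑ v ∈ s, (f ⁻¹' {w}).indicator φ v :=
    fun w => psum_eq_sum hsupp
  simp only [h1]
  rw [Finset.sum_comm]
  refine Finset.sum_congr rfl fun v hv => ?_
  rw [Finset.sum_eq_single (f v)]
  · exact Set.indicator_of_mem (show v ∈ f ⁻¹' {f v} from rfl) φ
  · intro w _ hw
    have hnv : v ∉ f ⁻¹' {w} := fun hc => hw (Set.mem_singleton_iff.1 hc).symm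
    exact Set.indicator_of_notMem hnv φ
  · intro h
    exact absurd (Finset.mem_image_of_mem f hv) h

lemma pushf_comp {f : T → T'} {g : T' → T''} {φ : T → ℝ} {s : Finset T}
    (hsupp : ∀ v ∉ s, φ v = 0) (w : T'') :
    pushf g (pushf f φ) w = pushf (g ∘ f) φ w := by
  have hsupp' : ∀ u ∉ s.image f, pushf f φ u = 0 := by
    intro u hu
    by_contra h
    exact hu (pushf_support hsupp h)
  rw [pushf, psum_eq_sum hsupp', pushf, psum_eq_sum hsupp]
  have step : ∀ u ∈ s.image f, (g ⁻¹' {w}).indicator (pushf f φ) u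
      = ∑ v ∈ s, (g ⁻¹' {w}).indicator (fun u' => (f ⁻¹' {u'}).indicator φ v) u := by
    intro u _
    by_cases h : u ∈ g ⁻¹' {w}
    · rw [Set.indicator_of_mem h, pushf, psum_eq_sum hsupp]
      exact Finset.sum_congr rfl fun v _ =>
        (Set.indicator_of_mem h (fun u' => (f ⁻¹' {u'}).indicator φ v)).symm
    · rw [Set.indicator_of_notMem h]
      exact (Finset.sum_eq_zero fun v _ => Set.indicator_of_notMem h _).symm
  rw [Finset.sum_congr rfl step, Finset.sum_comm]
  refine Finset.sum_congr rfl fun v hv => ?_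
  rw [Finset.sum_eq_single (f v)]
  · by_cases h : f v ∈ g ⁻¹' {w}
    · rw [Set.indicator_of_mem h, Set.indicator_of_mem (show v ∈ f ⁻¹' {f v} from rfl) φ,
        Set.indicator_of_mem (show v ∈ (g ∘ f) ⁻¹' {w} from h) φ]
    · rw [Set.indicator_of_notMem h,
        Set.indicator_of_notMem (show v ∉ (g ∘ f) ⁻¹' {w} from h) φ]
  · intro u _ hu
    have hv' : v ∉ f ⁻¹' {u} := fun hc => hu ((Set.mem_singleton_iff.1 hc).symm)
    by_cases h : u ∈ g ⁻¹' {w}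
    · rw [Set.indicator_of_mem h, Set.indicator_of_notMem hv']
    · rw [Set.indicator_of_notMem h]
  · intro h
    exact absurd (Finset.mem_image_of_mem f hv) h

lemma supp_of_mem {U : Set (T × T)} {φ : T → ℝ} (hφ : φ ∈ VRreal U) :
    ∃ s : Finset T, s ∈ VRF U ∧ (∀ v ∉ s, φ v = 0) ∧ ∑ v ∈ s, φ v = 1 := by
  obtain ⟨hpos, s, hsF, hsupp, hsum⟩ := hφ
  exact ⟨s, hsF, fun v hv => by by_contra h; exact hv (hsupp v h), hsum⟩

lemma pushf_mem {U : Set (T × T)} {U' : Set (T' × T')} {f : T → T'}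
    (hf : ∀ p ∈ U, (f p.1, f p.2) ∈ U') {φ : T → ℝ} (hφ : φ ∈ VRreal U) :
    pushf f φ ∈ VRreal U' := by
  have hpos := hφ.1
  obtain ⟨s, hsF, hsupp, hsum⟩ := supp_of_mem hφ
  refine ⟨fun w => psum_nonneg hsupp hpos, s.image f, ?_, ?_, ?_⟩
  · intro a ha b hb
    obtain ⟨va, hva, rfl⟩ := Finset.mem_image.1 ha
    obtain ⟨vb, hvb, rfl⟩ := Finset.mem_image.1 hb
    exact hf (va, vb) (hsF va hva vb hvb)
  · intro w hw
    exact pushf_support hsupp hw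
  · rw [pushf_sum hsupp]; exact hsum

lemma VRreal_mono {U V : Set (T × T)} (h : U ⊆ V) : VRreal U ⊆ VRreal V := by
  rintro φ ⟨hpos, s, hs, hsupp, hsum⟩
  exact ⟨hpos, s, fun a ha b hb => h (hs a ha b hb), hsupp, hsum⟩

end CoarseAux
namespace CoarseAux

variable {T T' : Type*}

open scoped Classical

lemma psum_add_compl {F : Set (Finset T)} (S : Set T) (φ : geomReal F) :
    psum S (φ : T → ℝ) + psum Sᶜ (φ : T → ℝ) = 1 := by
  obtain ⟨hpos, s, hsF, hsupp, hsum⟩ := φ.2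
  have hsupp' : ∀ v ∉ s, (φ : T → ℝ) v = 0 := fun v hv => by
    by_contra h; exact hv (hsupp v h)
  rw [psum_eq_sum hsupp', psum_eq_sum hsupp', ← Finset.sum_add_distrib]
  rw [show ∑ v ∈ s, (S.indicator (φ : T → ℝ) v + Sᶜ.indicator (φ : T → ℝ) v)
      = ∑ v ∈ s, (φ : T → ℝ) v from Finset.sum_congr rfl fun v _ => by
    by_cases h : v ∈ S
    · rw [Set.indicator_of_mem h, Set.indicator_of_notMem (by simpa using h), add_zero]
    · rw [Set.indicator_of_notMem h, Set.indicator_of_mem (by simpa using h), zero_add]]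
  exact hsum

lemma continuous_psum {F : Set (Finset T)} (S : Set T) :
    Continuous fun φ : geomReal F => psum S (φ : T → ℝ) := by
  rw [continuous_iff_continuousAt]
  intro φ₀
  obtain ⟨hpos₀, s₀, hs₀F, hsupp₀, hsum₀⟩ := φ₀.2
  have hsupp₀' : ∀ v ∉ s₀, (φ₀ : T → ℝ) v = 0 := fun v hv => by
    by_contra h; exact hv (hsupp₀ v h)
  -- key lower bound
  have key : ∀ S' : Set T, ∀ δ : ℝ, 0 ≤ δ → ∀ φ : geomReal F,
      (∀ v ∈ s₀, |(φ : T → ℝ) v - (φ₀ : T → ℝ) v| ≤ δ) →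
      psum S' (φ₀ : T → ℝ) - s₀.card * δ ≤ psum S' (φ : T → ℝ) := by
    intro S' δ hδ φ hcl
    obtain ⟨hpos, s, hsF, hsupp, hsum⟩ := φ.2
    have hsupp' : ∀ v ∉ s ∪ s₀, (φ : T → ℝ) v = 0 := fun v hv => by
      by_contra h
      exact hv (Finset.mem_union_left _ (hsupp v h))
    have h1 : psum S' (φ : T → ℝ) = ∑ v ∈ s ∪ s₀, S'.indicator (φ : T → ℝ) v :=
      psum_eq_sum hsupp'
    have h2 : ∑ v ∈ s₀, S'.indicator (φ : T → ℝ) v ≤ ∑ v ∈ s ∪ s₀, S'.indicator (φ : T → ℝ) v := by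
      refine Finset.sum_le_sum_of_subset_of_nonneg Finset.subset_union_right ?_
      intro v _ _
      exact Set.indicator_nonneg (fun a _ => hpos a) v
    have h3 : ∑ v ∈ s₀, S'.indicator (φ₀ : T → ℝ) v - s₀.card * δ
        ≤ ∑ v ∈ s₀, S'.indicator (φ : T → ℝ) v := by
      have : ∀ v ∈ s₀, S'.indicator (φ₀ : T → ℝ) v - S'.indicator (φ : T → ℝ) v ≤ δ := by
        intro v hv
        by_cases h : v ∈ S'
        · rw [Set.indicator_of_mem h, Set.indicator_of_mem h]
          have := hcl v hv
          have habs := abs_le.1 this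
          linarith [habs.1]
        · rw [Set.indicator_of_notMem h, Set.indicator_of_notMem h]
          simpa using hδ
      have hsumle : ∑ v ∈ s₀, (S'.indicator (φ₀ : T → ℝ) v - S'.indicator (φ : T → ℝ) v)
          ≤ ∑ _v ∈ s₀, δ := Finset.sum_le_sum this
      rw [Finset.sum_sub_distrib, Finset.sum_const, nsmul_eq_mul] at hsumle
      linarith
    rw [h1, psum_eq_sum hsupp₀']
    linarith
  -- now continuity at φ₀
  rw [ContinuousAt, Metric.tendsto_nhds]
  intro ε hε
  set δ : ℝ := ε / (2 * (s₀.card + 1)) with hδdef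
  have hδpos : 0 < δ := by positivity
  have hcards : (s₀.card : ℝ) * δ < ε := by
    have hδε : δ * (2 * ((s₀.card : ℝ) + 1)) = ε := by
      rw [hδdef]; field_simp
    nlinarith [hδpos, hε, Nat.cast_nonneg (α := ℝ) s₀.card]
  have hev : ∀ᶠ φ : geomReal F in nhds φ₀, ∀ v ∈ s₀, |(φ : T → ℝ) v - (φ₀ : T → ℝ) v| ≤ δ := by
    rw [Filter.eventually_all_finset]
    intro v _
    have hc : Continuous fun φ : geomReal F => (φ : T → ℝ) v :=
      (continuous_apply v).comp continuous_subtype_val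
    have hball : ∀ᶠ x : ℝ in nhds ((φ₀ : T → ℝ) v), |x - (φ₀ : T → ℝ) v| ≤ δ := by
      have := Metric.closedBall_mem_nhds ((φ₀ : T → ℝ) v) hδpos
      filter_upwards [this] with x hx
      simpa [Real.dist_eq] using hx
    exact (hc.continuousAt (x := φ₀)).eventually hball
  filter_upwards [hev] with φ hφcl
  have hlow := key S δ hδpos.le φ hφcl
  have hlowc := key Sᶜ δ hδpos.le φ hφcl
  have ht := psum_add_compl S φ
  have ht₀ := psum_add_compl S φ₀
  rw [Real.dist_eq, abs_lt]
  constructor <;> nlinarith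

end CoarseAux
namespace CoarseAux

variable {T T' : Type*}

/-- The continuous map between Vietoris–Rips realizations induced by a map compatible
with the entourages. -/
def pushCM {U : Set (T × T)} {U' : Set (T' × T')} (f : T → T')
    (hf : ∀ p ∈ U, (f p.1, f p.2) ∈ U') : C(VRreal U, VRreal U') :=
  ⟨fun φ => ⟨pushf f (φ : T → ℝ), pushf_mem hf φ.2⟩, by
    refine Continuous.subtype_mk ?_ _
    exact continuous_pi fun w => continuous_psum (F := VRF U) (f ⁻¹' {w})⟩

/-- Membership of convex combinations for contiguous maps. -/
lemma combo_mem {U V : Set (T × T)} (g : T → T)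
    (hU : U ⊆ V) (hg1 : ∀ p ∈ U, (g p.1, g p.2) ∈ V)
    (hg2 : ∀ p ∈ U, (p.1, g p.2) ∈ V) (hg3 : ∀ p ∈ U, (g p.1, p.2) ∈ V)
    {φ : T → ℝ} (hφ : φ ∈ VRreal U) {t : ℝ} (ht0 : 0 ≤ t) (ht1 : t ≤ 1) :
    (fun v => (1 - t) * φ v + t * pushf g φ v) ∈ VRreal V := by
  classical
  have hpos := hφ.1
  obtain ⟨s, hsF, hsupp, hsum⟩ := supp_of_mem hφ
  have hpushpos : ∀ w, 0 ≤ pushf g φ w := fun w => psum_nonneg hsupp hpos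
  have hpushsupp : ∀ w ∉ s.image g, pushf g φ w = 0 := by
    intro w hw
    by_contra h
    exact hw (pushf_support hsupp h)
  refine ⟨?_, s ∪ s.image g, ?_, ?_, ?_⟩
  · intro v
    show 0 ≤ (1 - t) * φ v + t * pushf g φ v
    nlinarith [hpos v, hpushpos v]
  · intro a ha b hb
    rcases Finset.mem_union.1 ha with ha' | ha' <;> rcases Finset.mem_union.1 hb with hb' | hb'
    · exact hU (hsF a ha' b hb')
    · obtain ⟨vb, hvb, rfl⟩ := Finset.mem_image.1 hb'
      exact hg2 (a, vb) (hsF a ha' vb hvb)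
    · obtain ⟨va, hva, rfl⟩ := Finset.mem_image.1 ha'
      exact hg3 (va, b) (hsF va hva b hb')
    · obtain ⟨va, hva, rfl⟩ := Finset.mem_image.1 ha'
      obtain ⟨vb, hvb, rfl⟩ := Finset.mem_image.1 hb'
      exact hg1 (va, vb) (hsF va hva vb hvb)
  · intro v hv
    by_contra hvs
    rw [Finset.mem_union] at hvs
    push_neg at hvs
    have h1 : φ v = 0 := hsupp v hvs.1
    have h2 : pushf g φ v = 0 := hpushsupp v hvs.2
    exact hv (by simp [h1, h2])
  · have e1 : ∑ v ∈ s ∪ s.image g, φ v = 1 := by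
      rw [← Finset.sum_subset Finset.subset_union_left (fun x _ hx => hsupp x hx)]
      exact hsum
    have e2 : ∑ v ∈ s ∪ s.image g, pushf g φ v = 1 := by
      rw [Finset.union_comm,
        ← Finset.sum_subset Finset.subset_union_left (fun x _ hx => hpushsupp x hx),
        pushf_sum hsupp]
      exact hsum
    rw [Finset.sum_add_distrib, ← Finset.mul_sum, ← Finset.mul_sum, e1, e2]
    ring

/-- The retract step: coarse connectivity passes along a coarse retraction. -/
lemma retract_connLT {X Y : Type*} {EX : Set (Set (X × X))} {EY : Set (Set (Y × Y))}
    (hEY : IsCoarseStructure EY)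
    (i : Y → X) (r : X → Y) (hi : Bornologous EY EX i) (hr : Bornologous EX EY r)
    {U₀ : Set (Y × Y)} (hU₀ : U₀ ∈ EY) (hclose : CloseMaps U₀ id (r ∘ i))
    (m : ℕ) (hX : CoarselyConnectedLT EX m) : CoarselyConnectedLT EY m := by
  intro U hU
  obtain ⟨VX, hVX, hUVX, htriv⟩ := hX (imgRel i U) (hi U hU)
  set V : Set (Y × Y) := U ∪ (imgRel r VX ∪ (relComp U U₀ ∪ relComp U₀ U)) with hVdef
  have hV : V ∈ EY := hEY.union_mem hU (hEY.union_mem (hr VX hVX)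
    (hEY.union_mem (hEY.comp_mem hU hU₀) (hEY.comp_mem hU₀ hU)))
  have hUV : U ⊆ V := fun p hp => Or.inl hp
  refine ⟨V, hV, hUV, fun k hk => ?_⟩
  have hsub : VRreal U ⊆ VRreal V := VRreal_mono hUV
  refine ⟨hsub, fun σ => ?_⟩
  obtain ⟨hsub', hnull⟩ := htriv k hk
  have hif : ∀ p ∈ U, (i p.1, i p.2) ∈ imgRel i U := fun p hp => ⟨p, hp, rfl⟩
  have hrf : ∀ p ∈ VX, (r p.1, r p.2) ∈ V :=
    fun p hp => Or.inr (Or.inl ⟨p, hp, rfl⟩)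
  set A : C(VRreal U, VRreal (imgRel i U)) := pushCM i hif with hA
  set inc1 : C(VRreal (imgRel i U), VRreal VX) :=
    ⟨Set.inclusion hsub', continuous_inclusion hsub'⟩ with hinc1
  set B : C(VRreal VX, VRreal V) := pushCM r hrf with hB
  -- contiguity data for g = r ∘ i
  have hg1 : ∀ p ∈ U, ((r ∘ i) p.1, (r ∘ i) p.2) ∈ V := by
    intro p hp
    exact Or.inr (Or.inl ⟨(i p.1, i p.2), hUVX (hif p hp), rfl⟩)
  have hg2 : ∀ p ∈ U, (p.1, (r ∘ i) p.2) ∈ V := by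
    intro p hp
    exact Or.inr (Or.inr (Or.inl ⟨p.2, hp, (hclose p.2).1⟩))
  have hg3 : ∀ p ∈ U, ((r ∘ i) p.1, p.2) ∈ V := by
    intro p hp
    exact Or.inr (Or.inr (Or.inr ⟨p.1, (hclose p.1).2, hp⟩))
  -- the straight-line homotopy
  have hmem : ∀ (z : Sph k) (t : ℝ), 0 ≤ t → t ≤ 1 →
      (fun v => (1 - t) * ((σ z : Y → ℝ) v) + t * pushf (r ∘ i) (σ z : Y → ℝ) v) ∈ VRreal V :=
    fun z t ht0 ht1 => combo_mem (r ∘ i) hUV hg1 hg2 hg3 (σ z).2 ht0 ht1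
  set L : C(Sph k, VRreal V) :=
    ContinuousMap.comp ⟨Set.inclusion hsub, continuous_inclusion hsub⟩ σ with hL
  set R : C(Sph k, VRreal V) := (B.comp inc1).comp (A.comp σ) with hR
  have hRnull : R.Nullhomotopic := (hnull (A.comp σ)).comp_right B
  have hRval : ∀ z, ((R z : Y → ℝ)) = pushf (r ∘ i) (σ z : Y → ℝ) := by
    intro z
    obtain ⟨s, _, hsupp, _⟩ := supp_of_mem (σ z).2
    have h0 : (R z : Y → ℝ) = pushf r (pushf i (σ z : Y → ℝ)) := rfl
    rw [h0]
    funext w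
    exact pushf_comp hsupp w
  have H : ContinuousMap.Homotopy L R :=
    { toFun := fun p => ⟨fun v => (1 - (p.1 : ℝ)) * ((σ p.2 : Y → ℝ) v)
        + (p.1 : ℝ) * pushf (r ∘ i) (σ p.2 : Y → ℝ) v,
        hmem p.2 (p.1 : ℝ) p.1.2.1 p.1.2.2⟩
      continuous_toFun := by
        refine Continuous.subtype_mk ?_ _
        refine continuous_pi fun v => ?_
        have hc1 : Continuous fun p : unitInterval × Sph k => (p.1 : ℝ) :=
          continuous_subtype_val.comp continuous_fst
        have hc2 : Continuous fun p : unitInterval × Sph k => (σ p.2 : Y → ℝ) v :=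
          (continuous_apply v).comp
            (continuous_subtype_val.comp (σ.continuous.comp continuous_snd))
        have hc3 : Continuous fun p : unitInterval × Sph k =>
            pushf (r ∘ i) (σ p.2 : Y → ℝ) v :=
          (continuous_psum (F := VRF U) ((r ∘ i) ⁻¹' {v})).comp
            (σ.continuous.comp continuous_snd)
        exact ((continuous_const.sub hc1).mul hc2).add (hc1.mul hc3)
      map_zero_left := by
        intro z
        apply Subtype.ext
        funext v
        simp [hL]
      map_one_left := by
        intro z
        apply Subtype.ext
        rw [hRval z]
        funext v
        simp }
  obtain ⟨y, hy⟩ := hRnull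
  exact ⟨y, ContinuousMap.Homotopic.trans ⟨H⟩ hy⟩

end CoarseAux

/-- **Proposition.** Coarsely equivalent coarse spaces are coarsely `n`-connected
simultaneously. -/
theorem coarselyConnected_iff_of_coarselyEquivalent {X Y : Type*}
    (EX : Set (Set (X × X))) (EY : Set (Set (Y × Y)))
    (hEX : IsCoarseStructure EX) (hEY : IsCoarseStructure EY)
    (hequiv : CoarselyEquivalent EX EY) (n : ℕ) :
    CoarselyConnected EX n ↔ CoarselyConnected EY n := by
  obtain ⟨i, r, hi, hr, ⟨U₀, hU₀, hcl⟩, ⟨U₀', hU₀', hcl'⟩⟩ := hequiv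
  constructor
  · intro hX
    exact CoarseAux.retract_connLT hEY i r hi hr hU₀ hcl _ hX
  · intro hY
    exact CoarseAux.retract_connLT hEX r i hr hi hU₀' hcl' _ hY

end
end
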